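/- Let 𝒜 ∈ ℝ^{n₁×⋯×n_d} be nonzero. The output of Algorithm C (sequential truncated leading singular vectors of the unfoldings A_j) satisfies 𝒜(x₁⁰,…,x_d⁰) ≥ √(∏ⱼ rⱼ/∏ⱼ nⱼ) · λ_max(A₁) / √(∏_{j=2}^{d−1} n_j) ≥ √(∏ⱼ rⱼ/∏ⱼ nⱼ) · v_opt / √(∏_{j=2}^{d−1} n_j). -/

import Mathlib

open Finset

noncomputable def enorm' {ι : Type*} [Fintype ι] (x : ι → ℝ) : ℝ :=
  Real.sqrt (∑ i, x i ^ 2)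

def dot {ι : Type*} [Fintype ι] (x y : ι → ℝ) : ℝ := ∑ i, x i * y i

noncomputable def l0 {ι : Type*} [Fintype ι] (x : ι → ℝ) : ℕ :=
  (Finset.univ.filter fun i => x i ≠ 0).card

def IsTrunc {ι : Type*} [Fintype ι] [DecidableEq ι] (a : ι → ℝ) (r : ℕ) (ar : ι → ℝ) : Prop :=
  ∃ S : Finset ι, S.card = r ∧ (∀ i ∈ S, ar i = a i) ∧ (∀ i ∉ S, ar i = 0) ∧
    ∀ i ∈ S, ∀ j ∉ S, |a j| ≤ |a i|

noncomputable def lmax {m n' : Type*} [Fintype m] [Fintype n'] (A : Matrix m n' ℝ) : ℝ :=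
  sSup {c | ∃ x : n' → ℝ, enorm' x = 1 ∧ c = enorm' (A.mulVec x)}

noncomputable def fnorm {m n' : Type*} [Fintype m] [Fintype n'] (A : Matrix m n' ℝ) : ℝ :=
  Real.sqrt (∑ i, ∑ j, A i j ^ 2)

def tri {n1 n2 n3 : ℕ} (A : Fin n1 → Fin n2 → Fin n3 → ℝ)
    (x : Fin n1 → ℝ) (y : Fin n2 → ℝ) (z : Fin n3 → ℝ) : ℝ :=
  ∑ i, ∑ j, ∑ k, A i j k * x i * y j * z k

def mlin {d : ℕ} {n : Fin d → ℕ} (A : (∀ j, Fin (n j)) → ℝ)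
    (x : ∀ j, Fin (n j) → ℝ) : ℝ :=
  ∑ i, A i * ∏ j, x j (i j)

/-- Unfolding A_j of Algorithm C (cf. Remark 3.1): rows indexed by mode j,
columns by the modes k > j, with the modes k < j contracted against x_k. -/
def unf {d : ℕ} {n : Fin d → ℕ} (A : (∀ k, Fin (n k)) → ℝ)
    (x : ∀ k, Fin (n k) → ℝ) (j : Fin d) :
    Matrix (Fin (n j)) (∀ k : {k : Fin d // j < k}, Fin (n k.1)) ℝ :=
  fun t q => ∑ i : ∀ k, Fin (n k), A i * ∏ k,
    (if k < j then x k (i k)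
     else if h : j < k then (if i k = q ⟨k, h⟩ then (1 : ℝ) else 0)
     else (if (⟨k, i k⟩ : Σ m : Fin d, Fin (n m)) = ⟨j, t⟩ then 1 else 0))

/-- Contraction of 𝒜 with x_k on every mode except j; at the final stage
j = d this equals A_{d-1}ᵀ x_{d-1}⁰. -/
def cvec {d : ℕ} {n : Fin d → ℕ} (A : (∀ k, Fin (n k)) → ℝ)
    (x : ∀ k, Fin (n k) → ℝ) (j : Fin d) : Fin (n j) → ℝ :=
  fun t => ∑ i : ∀ k, Fin (n k), A i * ∏ k,
    (if k = j then (if (⟨k, i k⟩ : Σ m : Fin d, Fin (n m)) = ⟨j, t⟩ then (1 : ℝ) else 0)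
     else x k (i k))

/-!
Write `u_j = A_jᵀ x_j⁰`. As `x_j⁰` is the normalized `r_j`-truncation of a unit leading left
singular vector `x̄_j` with right singular vector `w_j`,
`‖u_j‖ ≥ ⟨u_j, w_j⟩ = λ_max(A_j) ⟨x̄_j, x_j⁰⟩ ≥ √(r_j/n_j) λ_max(A_j)`: the `r_j` largest entries
of a vector carry at least the fraction `r_j/n_j` of its squared norm. The vector `u_j` is a
reshaping of `A_{j+1}`, so `‖u_j‖ = ‖A_{j+1}‖_F ≤ √n_{j+1} λ_max(A_{j+1})`, while the last one is
the vector whose truncation gives `x_d⁰`, so that `𝒜(x⁰) ≥ √(r_d/n_d) ‖u_{d-1}‖`. Telescoping gives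
the first bound. The second follows from `𝒜(y) = ⟨y₁, A₁ (y₂ ⊗ ⋯ ⊗ y_d)⟩ ≤ λ_max(A₁)` for unit
vectors `y_j`.
-/

open Matrix

section Vectors
variable {ι : Type*} [Fintype ι]

lemma enorm'_nonneg (x : ι → ℝ) : 0 ≤ enorm' x := Real.sqrt_nonneg _

lemma sq_enorm' (x : ι → ℝ) : enorm' x ^ 2 = ∑ i, x i ^ 2 :=
  Real.sq_sqrt (by positivity)

lemma dot_eq_dotProduct (x y : ι → ℝ) : dot x y = x ⬝ᵥ y := rfl

lemma dot_le_enorm'_mul_enorm' (x y : ι → ℝ) : dot x y ≤ enorm' x * enorm' y := by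
  rw [enorm', enorm', ← Real.sqrt_mul (by positivity)]
  exact Real.le_sqrt_of_sq_le (by simpa only [dot] using sum_mul_sq_le_sq_mul_sq univ x y)

lemma abs_le_enorm' (x : ι → ℝ) (i : ι) : |x i| ≤ enorm' x :=
  Real.abs_le_sqrt (single_le_sum (fun j _ => sq_nonneg (x j)) (mem_univ i))

lemma enorm'_smul (c : ℝ) (x : ι → ℝ) : enorm' (c • x) = |c| * enorm' x := by
  simp only [enorm', Pi.smul_apply, smul_eq_mul, mul_pow, ← mul_sum]
  rw [Real.sqrt_mul (sq_nonneg c), Real.sqrt_sq_eq_abs]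

lemma enorm'_eq_zero {x : ι → ℝ} : enorm' x = 0 ↔ x = 0 := by
  rw [enorm', Real.sqrt_eq_zero (by positivity),
    sum_eq_zero_iff_of_nonneg fun i _ => sq_nonneg (x i), funext_iff]
  simp

lemma enorm'_tprod {κ : Type*} [Fintype κ] [DecidableEq κ] {β : κ → Type*} [∀ k, Fintype (β k)]
    (y : ∀ k, β k → ℝ) : enorm' (fun q : ∀ k, β k => ∏ k, y k (q k)) = ∏ k, enorm' (y k) := by
  simp only [enorm', ← Real.sqrt_prod _ fun k _ => sum_nonneg fun _ _ => sq_nonneg _,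
    ← prod_pow, Fintype.prod_sum]

end Vectors

lemma card_mul_sum_le_card_mul_sum_of_forall_le {ι : Type*} [Fintype ι] [DecidableEq ι]
    (f : ι → ℝ) (S : Finset ι) (hS : ∀ i ∈ S, ∀ j ∉ S, f j ≤ f i) :
    (S.card : ℝ) * ∑ i, f i ≤ Fintype.card ι * ∑ i ∈ S, f i := by
  have hpairs : 0 ≤ ∑ i ∈ S, ∑ j ∈ Sᶜ, (f i - f j) :=
    sum_nonneg fun i hi => sum_nonneg fun j hj => sub_nonneg.2 (hS i hi j (mem_compl.1 hj))
  simp only [sum_sub_distrib, sum_const, nsmul_eq_mul] at hpairs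
  rw [← mul_sum] at hpairs
  rw [← sum_add_sum_compl S f, ← card_add_card_compl S]
  push_cast
  nlinarith [hpairs]

namespace IsTrunc
variable {ι : Type*} [Fintype ι] [DecidableEq ι] {a t : ι → ℝ} {r : ℕ}

lemma exists_sq_enorm'_eq (h : IsTrunc a r t) : ∃ S : Finset ι, S.card = r ∧
    enorm' t ^ 2 = ∑ i ∈ S, a i ^ 2 ∧ ∀ i ∈ S, ∀ j ∉ S, a j ^ 2 ≤ a i ^ 2 := by
  obtain ⟨S, hcard, hon, hoff, hmax⟩ := h
  refine ⟨S, hcard, ?_, fun i hi j hj => sq_le_sq.2 (hmax i hi j hj)⟩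
  rw [sq_enorm', ← sum_subset (subset_univ S) fun i _ hi => by rw [hoff i hi]; ring]
  exact sum_congr rfl fun i hi => by rw [hon i hi]

lemma sqrt_mul_enorm'_le (h : IsTrunc a r t) :
    Real.sqrt (r / Fintype.card ι) * enorm' a ≤ enorm' t := by
  obtain ⟨S, rfl, ht, hS⟩ := h.exists_sq_enorm'_eq
  rcases (Fintype.card ι).eq_zero_or_pos with hι | hι
  · simpa [hι] using enorm'_nonneg t
  rw [← Real.sqrt_sq (enorm'_nonneg a), ← Real.sqrt_mul (by positivity),
    ← Real.sqrt_sq (enorm'_nonneg t), sq_enorm', ht]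
  refine Real.sqrt_le_sqrt ?_
  rw [div_mul_eq_mul_div, div_le_iff₀ (by exact_mod_cast hι), mul_comm _ (Fintype.card ι : ℝ)]
  exact card_mul_sum_le_card_mul_sum_of_forall_le _ S hS

lemma dot_normalize (h : IsTrunc a r t) : dot a (fun s => t s / enorm' t) = enorm' t := by
  obtain ⟨S, hcard, hon, hoff, -⟩ := h
  have hat : dot a t = enorm' t ^ 2 := by
    rw [sq_enorm', dot]
    refine sum_congr rfl fun i _ => ?_
    by_cases hi : i ∈ S
    · rw [hon i hi, sq]
    · rw [hoff i hi]; ring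
  by_cases h0 : enorm' t = 0
  · simp [dot, h0]
  · simp only [dot, mul_div, ← sum_div]
    rw [← dot, hat, sq, mul_div_cancel_right₀ _ h0]

lemma sqrt_mul_enorm'_le_dot (h : IsTrunc a r t) :
    Real.sqrt (r / Fintype.card ι) * enorm' a ≤ dot a (fun s => t s / enorm' t) :=
  h.dot_normalize.symm ▸ h.sqrt_mul_enorm'_le

end IsTrunc

section Matrices
variable {m n' : Type*} [Fintype m] [Fintype n'] (M : Matrix m n' ℝ)

lemma enorm'_mulVec_le_fnorm_mul (v : n' → ℝ) : enorm' (M *ᵥ v) ≤ fnorm M * enorm' v := by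
  rw [enorm', fnorm, enorm', ← Real.sqrt_mul (by positivity), sum_mul]
  exact Real.sqrt_le_sqrt (sum_le_sum fun i _ => by
    simpa [mulVec, dotProduct, sq] using sum_mul_sq_le_sq_mul_sq univ (M i) v)

lemma le_lmax {v : n' → ℝ} (hv : enorm' v = 1) : enorm' (M *ᵥ v) ≤ lmax M := by
  refine le_csSup ⟨fnorm M, ?_⟩ ⟨v, hv, rfl⟩
  rintro c ⟨u, hu, rfl⟩
  simpa [hu] using enorm'_mulVec_le_fnorm_mul M u

lemma lmax_nonneg : 0 ≤ lmax M :=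
  Real.sSup_nonneg fun _ ⟨_, _, hc⟩ => hc ▸ enorm'_nonneg _

lemma enorm'_mulVec_le (v : n' → ℝ) : enorm' (M *ᵥ v) ≤ lmax M * enorm' v := by
  rcases eq_or_ne v 0 with rfl | hv
  · simp [enorm']
  have hpos : 0 < enorm' v := (enorm'_nonneg v).lt_of_ne' (enorm'_eq_zero.not.2 hv)
  have hunit : enorm' ((enorm' v)⁻¹ • v) = 1 := by
    rw [enorm'_smul, abs_inv, abs_of_pos hpos, inv_mul_cancel₀ hpos.ne']
  have h := le_lmax M hunit
  rw [mulVec_smul, enorm'_smul, abs_inv, abs_of_pos hpos, inv_mul_le_iff₀ hpos] at h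
  linarith

/-- Each row `Mᵢ` satisfies `‖Mᵢ‖² = (M Mᵢ)ᵢ ≤ λ ‖Mᵢ‖`, so every row has norm at most `λ`. -/
lemma fnorm_le_sqrt_card_mul_lmax : fnorm M ≤ Real.sqrt (Fintype.card m) * lmax M := by
  have hrow : ∀ i, enorm' (M i) ^ 2 ≤ lmax M ^ 2 := fun i => by
    have hdiag : (M *ᵥ M i) i = enorm' (M i) ^ 2 := by
      rw [sq_enorm']; simp only [mulVec, dotProduct, sq]
    have h := (le_abs_self _).trans ((abs_le_enorm' (M *ᵥ M i) i).trans (enorm'_mulVec_le M (M i)))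
    rw [hdiag] at h
    nlinarith [enorm'_nonneg (M i)]
  rw [fnorm, ← Real.sqrt_sq (lmax_nonneg M), ← Real.sqrt_mul (by positivity)]
  refine Real.sqrt_le_sqrt ?_
  calc ∑ i, ∑ j, M i j ^ 2 = ∑ i, enorm' (M i) ^ 2 := by simp only [sq_enorm']
    _ ≤ ∑ _i : m, lmax M ^ 2 := sum_le_sum fun i _ => hrow i
    _ = Fintype.card m * lmax M ^ 2 := by rw [sum_const, nsmul_eq_mul, card_univ]

lemma dot_transpose_mulVec (x : m → ℝ) (w : n' → ℝ) :
    dot (Mᵀ *ᵥ x) w = dot x (M *ᵥ w) := by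
  simp only [dot_eq_dotProduct, mulVec_transpose, dotProduct_mulVec]

/-- One step of the algorithm: `x` is the normalized `r`-truncation of a leading left singular
vector `xb` of `M`, with right singular vector `w`. -/
lemma sqrt_mul_lmax_le_enorm'_transpose_mulVec [DecidableEq m] {xb t : m → ℝ} {w : n' → ℝ}
    {r : ℕ} (hxb : enorm' xb = 1) (hw : enorm' w = 1) (hMw : M *ᵥ w = fun s => lmax M * xb s)
    (htr : IsTrunc xb r t) :
    Real.sqrt (r / Fintype.card m) * lmax M ≤ enorm' (Mᵀ *ᵥ fun s => t s / enorm' t) := by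
  set x := fun s => t s / enorm' t
  calc Real.sqrt (r / Fintype.card m) * lmax M
      = lmax M * (Real.sqrt (r / Fintype.card m) * enorm' xb) := by rw [hxb]; ring
    _ ≤ lmax M * dot xb x := mul_le_mul_of_nonneg_left htr.sqrt_mul_enorm'_le_dot (lmax_nonneg M)
    _ = dot x (M *ᵥ w) := by simp only [hMw, dot, mul_sum]; exact sum_congr rfl fun _ _ => by ring
    _ = dot (Mᵀ *ᵥ x) w := (dot_transpose_mulVec M x w).symm
    _ ≤ enorm' (Mᵀ *ᵥ x) := by simpa [hw] using dot_le_enorm'_mul_enorm' (Mᵀ *ᵥ x) w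

end Matrices

def piGtEquivOfCovBy {ι : Type*} [LinearOrder ι] (β : ι → Type*) {j j' : ι} (h : j ⋖ j') :
    (∀ k : {k // j < k}, β k) ≃ β j' × ∀ k : {k // j' < k}, β k where
  toFun q := (q ⟨j', h.lt⟩, fun k => q ⟨k, h.lt.trans k.2⟩)
  invFun p k := if hk : j' < k then p.2 ⟨k, hk⟩ else
    cast (congrArg β (le_antisymm (not_lt.1 (h.2 k.2)) (not_lt.1 hk))) p.1
  left_inv q := by
    funext ⟨k, hjk⟩
    by_cases hk : j' < k
    · simp [hk]
    · obtain rfl : j' = k := le_antisymm (not_lt.1 (h.2 hjk)) (not_lt.1 hk)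
      simp
  right_inv p := by
    refine Prod.ext (by simp) (funext fun k => by simp [k.2])

section Unfoldings
variable {d : ℕ} {n : Fin d → ℕ} (A : (∀ k, Fin (n k)) → ℝ) (x : ∀ k, Fin (n k) → ℝ)

lemma sum_mlin_update_single_mul (f : ∀ k, Fin (n k) → ℝ) (j : Fin d) (c : Fin (n j) → ℝ) :
    ∑ s, mlin A (Function.update f j (Pi.single s 1)) * c s = mlin A (Function.update f j c) := by
  have hlin : ∀ g : Fin (n j) → ℝ,
      mlin A (Function.update f j g) = ∑ i, g (i j) * (A i * ∏ k ∈ univ.erase j, f k (i k)) := by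
    intro g
    refine sum_congr rfl fun i _ => ?_
    rw [prod_congr rfl fun k _ => Function.apply_update (fun k φ => φ (i k)) f j g k,
      prod_update_of_mem (mem_univ j), sdiff_singleton_eq_erase]
    ring
  simp only [hlin, sum_mul, Pi.single_apply]
  rw [sum_comm]
  refine sum_congr rfl fun i _ => ?_
  simp [mul_comm]

def withBasis (p : Fin d → Prop) [DecidablePred p]
    (q : ∀ k : {k // p k}, Fin (n k)) : ∀ k, Fin (n k) → ℝ :=
  fun k => if h : p k then Pi.single (q ⟨k, h⟩) 1 else x k

lemma unf_apply (j : Fin d) (s : Fin (n j)) (q : ∀ k : {k // j < k}, Fin (n k)) :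
    unf A x j s q = mlin A (Function.update (withBasis x (j < ·) q) j (Pi.single s 1)) := by
  refine sum_congr rfl fun i _ => congrArg (A i * ·) (prod_congr rfl fun k _ => ?_)
  rcases lt_trichotomy k j with h | rfl | h
  · simp [withBasis, h, h.ne, lt_asymm h]
  · simp [Pi.single_apply]
  · simp [withBasis, h, h.ne', lt_asymm h, Pi.single_apply]

lemma cvec_apply (j : Fin d) (s : Fin (n j)) :
    cvec A x j s = mlin A (Function.update x j (Pi.single s 1)) := by
  refine sum_congr rfl fun i _ => congrArg (A i * ·) (prod_congr rfl fun k _ => ?_)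
  rcases eq_or_ne k j with rfl | h
  · simp [Pi.single_apply]
  · simp [h]

lemma transpose_mulVec_unf (j : Fin d) (v : Fin (n j) → ℝ) :
    (unf A x j)ᵀ *ᵥ v = fun q => mlin A (Function.update (withBasis x (j < ·) q) j v) := by
  funext q
  simp only [mulVec, dotProduct, transpose_apply, unf_apply]
  exact sum_mlin_update_single_mul A _ j v

lemma transpose_mulVec_unf_self (j : Fin d) :
    (unf A x j)ᵀ *ᵥ x j = fun q => mlin A (withBasis x (j < ·) q) := by
  rw [transpose_mulVec_unf]
  funext q
  rw [Function.update_eq_self_iff.2 (by simp [withBasis])]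

lemma mlin_eq_dot_cvec (j : Fin d) : mlin A x = dot (cvec A x j) (x j) := by
  simp only [dot, cvec_apply, sum_mlin_update_single_mul, Function.update_eq_self]

lemma withBasis_of_covBy {j j' : Fin d} (h : j ⋖ j') (q : ∀ k : {k // j < k}, Fin (n k)) :
    withBasis x (j < ·) q = Function.update (withBasis x (j' < ·) fun k => q ⟨k, h.lt.trans k.2⟩)
      j' (Pi.single (q ⟨j', h.lt⟩) 1) := by
  funext k
  rcases eq_or_ne k j' with rfl | hk
  · simp [withBasis, h.lt]
  rw [Function.update_of_ne hk]
  by_cases hjk : j' < k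
  · simp [withBasis, hjk, h.lt.trans hjk]
  · have : ¬ j < k := fun hjk' =>
      hk (le_antisymm (not_lt.1 hjk) (not_lt.1 (h.2 hjk')))
    simp [withBasis, hjk, this]

lemma transpose_mulVec_unf_self_of_covBy {j j' : Fin d} (h : j ⋖ j')
    (q : ∀ k : {k // j < k}, Fin (n k)) :
    ((unf A x j)ᵀ *ᵥ x j) q = unf A x j' (q ⟨j', h.lt⟩) (fun k => q ⟨k, h.lt.trans k.2⟩) := by
  rw [transpose_mulVec_unf_self, unf_apply, ← withBasis_of_covBy x h]

lemma enorm'_transpose_mulVec_unf_self_of_covBy {j j' : Fin d} (h : j ⋖ j') :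
    enorm' ((unf A x j)ᵀ *ᵥ x j) = fnorm (unf A x j') := by
  rw [enorm', fnorm, ← Fintype.sum_prod_type']
  exact congrArg Real.sqrt (Fintype.sum_equiv (piGtEquivOfCovBy (fun k => Fin (n k)) h) _ _
    fun q => by rw [transpose_mulVec_unf_self_of_covBy A x h]; rfl)

lemma unf_apply_of_isTop {j : Fin d} (hj : IsTop j) (s : Fin (n j))
    (q : ∀ k : {k // j < k}, Fin (n k)) : unf A x j s q = cvec A x j s := by
  rw [unf_apply, cvec_apply]
  congr 2
  funext k
  simp [withBasis, not_lt.2 (hj k)]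

lemma fnorm_unf_of_isTop {j : Fin d} (hj : IsTop j) : fnorm (unf A x j) = enorm' (cvec A x j) := by
  have : IsEmpty {k // j < k} := ⟨fun k => (hj k.1).not_gt k.2⟩
  simp only [fnorm, enorm', Fintype.sum_unique, unf_apply_of_isTop A x hj]

/-- Multilinearity of `mlin` in the modes of `p`, expanded in the standard basis. -/
lemma sum_prod_mul_mlin_withBasis (y : ∀ k, Fin (n k) → ℝ) (p : Fin d → Prop) [DecidablePred p] :
    ∑ q : ∀ k : {k // p k}, Fin (n k), (∏ k : {k // p k}, y k (q k)) * mlin A (withBasis y p q) =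
      mlin A y := by
  simp only [mlin, mul_sum]
  rw [sum_comm]
  refine sum_congr rfl fun i _ => ?_
  rw [sum_eq_single fun k : {k // p k} => i k]
  · have hdiag : ∀ k,
        withBasis y p (fun k : {k // p k} => i k) k (i k) = if p k then 1 else y k (i k) :=
      fun k => by by_cases hk : p k <;> simp [withBasis, hk]
    simp only [hdiag, prod_ite, prod_const_one, one_mul]
    rw [← prod_subtype (univ.filter p) (by simp) fun k => y k (i k),
      ← prod_filter_mul_prod_filter_not univ p]
    ring
  · intro q _ hq
    obtain ⟨k, hk⟩ := Function.ne_iff.1 hq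
    rw [prod_eq_zero (mem_univ k.1) (by simp [withBasis, k.2, Ne.symm hk]),
      mul_zero, mul_zero]
  · exact fun h => absurd (mem_univ _) h

lemma mlin_le_lmax_unf (y : ∀ k, Fin (n k) → ℝ) {j : Fin d} (hj : IsBot j)
    (hy : ∀ k, enorm' (y k) = 1) : mlin A y ≤ lmax (unf A x j) := by
  set z := fun q : ∀ k : {k // j < k}, Fin (n k) => ∏ k : {k // j < k}, y k (q k)
  have hz : enorm' z = 1 := by simp [z, enorm'_tprod, hy]
  have hAy : (unf A x j)ᵀ *ᵥ y j = fun q => mlin A (withBasis y (j < ·) q) := by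
    rw [transpose_mulVec_unf]
    funext q
    congr 1
    funext k
    rcases eq_or_ne k j with rfl | hk
    · simp [withBasis]
    · simp [withBasis, hk, (hj k).lt_of_ne hk.symm]
  calc mlin A y = dot ((unf A x j)ᵀ *ᵥ y j) z := by
        rw [hAy, dot, ← sum_prod_mul_mlin_withBasis A y (j < ·)]
        exact sum_congr rfl fun _ _ => mul_comm _ _
    _ = dot (y j) (unf A x j *ᵥ z) := dot_transpose_mulVec _ _ _
    _ ≤ enorm' (y j) * enorm' (unf A x j *ᵥ z) := dot_le_enorm'_mul_enorm' _ _
    _ ≤ lmax (unf A x j) := by simpa [hy j, hz] using enorm'_mulVec_le (unf A x j) z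

end Unfoldings

lemma prod_mul_le_prod_mul_of_chain {R : Type*} [CommSemiring R] [PartialOrder R]
    [IsOrderedRing R] {m : ℕ} (ρ L a : Fin (m + 1) → R) (ν : Fin m → R) (hρ : ∀ i, 0 ≤ ρ i)
    (hν : ∀ i, 0 ≤ ν i) (hLa : ∀ i, ρ i * L i ≤ a i)
    (haL : ∀ i : Fin m, a i.castSucc ≤ ν i * L i.succ) :
    (∏ i, ρ i) * L 0 ≤ (∏ i, ν i) * a (Fin.last m) := by
  induction m with
  | zero => simpa using hLa 0
  | succ m ih =>
    have ih' := ih (ρ ∘ Fin.castSucc) (L ∘ Fin.castSucc) (a ∘ Fin.castSucc) (ν ∘ Fin.castSucc)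
      (fun i => hρ _) (fun i => hν _) (fun i => hLa _) (fun i => haL _)
    simp only [Function.comp_apply, Fin.castSucc_zero] at ih'
    have hνprod : 0 ≤ ∏ i : Fin m, ν i.castSucc := prod_nonneg fun i _ => hν _
    rw [Fin.prod_univ_castSucc ρ, Fin.prod_univ_castSucc ν]
    calc (∏ i : Fin (m + 1), ρ i.castSucc) * ρ (Fin.last _) * L 0
        = ρ (Fin.last _) * ((∏ i : Fin (m + 1), ρ i.castSucc) * L 0) := by ring
      _ ≤ ρ (Fin.last _) * ((∏ i : Fin m, ν i.castSucc) * a (Fin.last m).castSucc) :=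
        mul_le_mul_of_nonneg_left ih' (hρ _)
      _ ≤ ρ (Fin.last _) * ((∏ i : Fin m, ν i.castSucc) * (ν (Fin.last m) * L (Fin.last _))) :=
        mul_le_mul_of_nonneg_left (mul_le_mul_of_nonneg_left (haL _) hνprod) (hρ _)
      _ = (∏ i : Fin m, ν i.castSucc) * ν (Fin.last m) * (ρ (Fin.last _) * L (Fin.last _)) := by
        ring
      _ ≤ (∏ i : Fin m, ν i.castSucc) * ν (Fin.last m) * a (Fin.last _) :=
        mul_le_mul_of_nonneg_left (hLa _) (mul_nonneg hνprod (hν _))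

lemma Fin.castSucc_covBy_succ {m : ℕ} (i : Fin m) : i.castSucc ⋖ i.succ :=
  ⟨Fin.castSucc_lt_succ, fun c h₁ h₂ => by
    simp only [Fin.lt_def, Fin.val_castSucc, Fin.val_succ] at h₁ h₂
    omega⟩

lemma prod_erase_zero_erase_last {M : Type*} [CommMonoid M] {e : ℕ} (f : Fin (e + 2) → M) :
    ∏ j ∈ (univ.erase 0).erase (Fin.last (e + 1)), f j = ∏ i : Fin e, f i.castSucc.succ := by
  have hsucc := map_erase ⟨Fin.succ, Fin.succ_injective _⟩ univ (Fin.last e)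
  rw [Function.Embedding.coeFn_mk, Fin.succ_last] at hsucc
  rw [Fin.univ_succ, erase_cons, ← hsucc, Fin.univ_castSuccEmb, erase_cons, prod_map, prod_map]
  rfl

lemma sqrt_prod_div_mul_lmax_le {e : ℕ} {n : Fin (e + 2) → ℕ} (A : (∀ k, Fin (n k)) → ℝ)
    (x : ∀ k, Fin (n k) → ℝ) (r : Fin (e + 2) → ℕ)
    (hstep : ∀ i : Fin (e + 1), Real.sqrt (r i.castSucc / n i.castSucc) *
      lmax (unf A x i.castSucc) ≤ enorm' ((unf A x i.castSucc)ᵀ *ᵥ x i.castSucc))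
    (hlast : Real.sqrt (r (Fin.last _) / n (Fin.last _)) * enorm' (cvec A x (Fin.last _)) ≤
      mlin A x) :
    Real.sqrt ((∏ j, (r j : ℝ)) / ∏ j, (n j : ℝ)) * lmax (unf A x 0) ≤
      Real.sqrt (∏ j ∈ (univ.erase 0).erase (Fin.last (e + 1)), (n j : ℝ)) * mlin A x := by
  have hchain := prod_mul_le_prod_mul_of_chain
    (fun i : Fin (e + 1) => Real.sqrt (r i.castSucc / n i.castSucc))
    (fun i => lmax (unf A x i.castSucc)) (fun i => enorm' ((unf A x i.castSucc)ᵀ *ᵥ x i.castSucc))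
    (fun i : Fin e => Real.sqrt (n i.castSucc.succ)) (fun _ => Real.sqrt_nonneg _)
    (fun _ => Real.sqrt_nonneg _) hstep fun i => by
      have h := fnorm_le_sqrt_card_mul_lmax (unf A x i.castSucc.succ)
      rw [← enorm'_transpose_mulVec_unf_self_of_covBy A x (Fin.castSucc_covBy_succ _),
        Fintype.card_fin, Fin.succ_castSucc] at h
      exact h
  rw [enorm'_transpose_mulVec_unf_self_of_covBy A x (Fin.castSucc_covBy_succ _), Fin.succ_last,
    fnorm_unf_of_isTop A x fun k => Fin.le_last k, Fin.castSucc_zero] at hchain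
  rw [← prod_div_distrib, Real.sqrt_prod _ fun _ _ => by positivity, Fin.prod_univ_castSucc,
    Real.sqrt_prod _ fun _ _ => by positivity, prod_erase_zero_erase_last]
  calc (∏ i : Fin (e + 1), Real.sqrt (r i.castSucc / n i.castSucc)) *
        Real.sqrt (r (Fin.last _) / n (Fin.last _)) * lmax (unf A x 0)
      = Real.sqrt (r (Fin.last _) / n (Fin.last _)) *
        ((∏ i : Fin (e + 1), Real.sqrt (r i.castSucc / n i.castSucc)) * lmax (unf A x 0)) := by
        ring
    _ ≤ Real.sqrt (r (Fin.last _) / n (Fin.last _)) *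
        ((∏ i : Fin e, Real.sqrt (n i.castSucc.succ)) * enorm' (cvec A x (Fin.last _))) :=
        mul_le_mul_of_nonneg_left hchain (Real.sqrt_nonneg _)
    _ = (∏ i : Fin e, Real.sqrt (n i.castSucc.succ)) *
        (Real.sqrt (r (Fin.last _) / n (Fin.last _)) * enorm' (cvec A x (Fin.last _))) := by ring
    _ ≤ (∏ i : Fin e, Real.sqrt (n i.castSucc.succ)) * mlin A x :=
        mul_le_mul_of_nonneg_left hlast (prod_nonneg fun _ _ => Real.sqrt_nonneg _)

theorem stmt_14_general {d : ℕ} {n : Fin d → ℕ} (hd : 3 ≤ d)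
    (A : (∀ k, Fin (n k)) → ℝ) (hA : A ≠ 0)
    (r : Fin d → ℕ)
    (first last : Fin d) (hfirst : (first : ℕ) = 0) (hlast : (last : ℕ) = d - 1)
    (x xb : ∀ j, Fin (n j) → ℝ) (t : ∀ j, Fin (n j) → ℝ)
    (w : ∀ j, (∀ k : {k : Fin d // j < k}, Fin (n k.1)) → ℝ)
    -- steps 1-2: for j = 1,…,d-1, x_j⁰ is the normalized r_j-truncation of the
    -- leading left singular vector of A_j
    (hstep : ∀ j, j ≠ last →
      enorm' (xb j) = 1 ∧ enorm' (w j) = 1 ∧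
      (unf A x j).mulVec (w j) = (fun s => lmax (unf A x j) * xb j s) ∧
      (unf A x j).transpose.mulVec (xb j) = (fun q => lmax (unf A x j) * w j q) ∧
      IsTrunc (xb j) (r j) (t j) ∧ x j = fun s => t j s / enorm' (t j))
    -- step 3: x_d⁰ is the normalized r_d-truncation of A_{d-1}ᵀ x_{d-1}⁰
    (hlaststep : IsTrunc (cvec A x last) (r last) (t last) ∧
      x last = fun s => t last s / enorm' (t last)) :
    mlin A x ≥
        Real.sqrt ((∏ j, (r j : ℝ)) / ∏ j, (n j : ℝ)) *
          (lmax (unf A x first) /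
            Real.sqrt (∏ j ∈ (Finset.univ.erase first).erase last, (n j : ℝ))) ∧
      ∀ y : ∀ j, Fin (n j) → ℝ, (∀ j, enorm' (y j) = 1 ∧ l0 (y j) ≤ r j) →
        Real.sqrt ((∏ j, (r j : ℝ)) / ∏ j, (n j : ℝ)) *
          (mlin A y /
            Real.sqrt (∏ j ∈ (Finset.univ.erase first).erase last, (n j : ℝ))) ≤
          mlin A x := by
  obtain ⟨e, rfl⟩ : ∃ e, d = e + 2 := ⟨d - 2, by omega⟩
  obtain rfl : first = 0 := Fin.ext hfirst
  obtain rfl : last = Fin.last (e + 1) := Fin.ext hlast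
  obtain ⟨i₀, -⟩ := Function.ne_iff.1 hA
  have hmid : 0 < Real.sqrt (∏ j ∈ (univ.erase 0).erase (Fin.last (e + 1)), (n j : ℝ)) :=
    Real.sqrt_pos.2 (prod_pos fun j _ => Nat.cast_pos.2 (i₀ j).pos)
  have hbound := sqrt_prod_div_mul_lmax_le A x r (fun i => by
      obtain ⟨hxb, hw, hAw, -, htr, hxi⟩ := hstep i.castSucc (Fin.castSucc_lt_last i).ne
      simpa [hxi] using sqrt_mul_lmax_le_enorm'_transpose_mulVec _ hxb hw hAw htr) (by
      obtain ⟨htr, hxl⟩ := hlaststep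
      rw [mlin_eq_dot_cvec A x (Fin.last _), hxl]
      simpa using htr.sqrt_mul_enorm'_le_dot)
  have halg : Real.sqrt ((∏ j, (r j : ℝ)) / ∏ j, (n j : ℝ)) *
      (lmax (unf A x 0) / Real.sqrt (∏ j ∈ (univ.erase 0).erase (Fin.last (e + 1)), (n j : ℝ)))
      ≤ mlin A x := by
    rw [mul_div_assoc', div_le_iff₀ hmid, mul_comm (mlin A x)]
    exact hbound
  refine ⟨halg, fun y hy => le_trans ?_ halg⟩
  gcongr
  exact mlin_le_lmax_unf A x y (fun k => Fin.zero_le k) fun k => (hy k).1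

/-- Theorem 3.4: approximation bound of Algorithm C (sequential truncated
leading singular vectors of the unfoldings). -/
theorem stmt_14 {d : ℕ} {n : Fin d → ℕ} (hd : 3 ≤ d)
    (A : (∀ k, Fin (n k)) → ℝ) (hA : A ≠ 0)
    (r : Fin d → ℕ) (hr : ∀ j, 1 ≤ r j ∧ r j ≤ n j)
    (first last : Fin d) (hfirst : (first : ℕ) = 0) (hlast : (last : ℕ) = d - 1)
    (x xb : ∀ j, Fin (n j) → ℝ) (t : ∀ j, Fin (n j) → ℝ)
    (w : ∀ j, (∀ k : {k : Fin d // j < k}, Fin (n k.1)) → ℝ)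
    -- steps 1-2: for j = 1,…,d-1, x_j⁰ is the normalized r_j-truncation of the
    -- leading left singular vector of A_j
    (hstep : ∀ j, j ≠ last →
      enorm' (xb j) = 1 ∧ enorm' (w j) = 1 ∧
      (unf A x j).mulVec (w j) = (fun s => lmax (unf A x j) * xb j s) ∧
      (unf A x j).transpose.mulVec (xb j) = (fun q => lmax (unf A x j) * w j q) ∧
      IsTrunc (xb j) (r j) (t j) ∧ x j = fun s => t j s / enorm' (t j))
    -- step 3: x_d⁰ is the normalized r_d-truncation of A_{d-1}ᵀ x_{d-1}⁰
    (hlaststep : IsTrunc (cvec A x last) (r last) (t last) ∧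
      x last = fun s => t last s / enorm' (t last)) :
    mlin A x ≥
        Real.sqrt ((∏ j, (r j : ℝ)) / ∏ j, (n j : ℝ)) *
          (lmax (unf A x first) /
            Real.sqrt (∏ j ∈ (Finset.univ.erase first).erase last, (n j : ℝ))) ∧
      ∀ y : ∀ j, Fin (n j) → ℝ, (∀ j, enorm' (y j) = 1 ∧ l0 (y j) ≤ r j) →
        Real.sqrt ((∏ j, (r j : ℝ)) / ∏ j, (n j : ℝ)) *
          (mlin A y /
            Real.sqrt (∏ j ∈ (Finset.univ.erase first).erase last, (n j : ℝ))) ≤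
          mlin A x :=
  stmt_14_general hd A hA r first last hfirst hlast x xb t w hstep hlaststep
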